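/- For every a > 0 and every t > 0, one has ∫₀^t erf( a/√τ ) dτ = (2a² + t)·erf( a/√t ) + 2a·√(t/π)·exp(−a²/t) − 2a². -/

import Mathlib

/-!
The function
`F(u) = (2a² + u) erf(a/√u) + 2a √(u/π) exp(-a²/u) - 2a²`
(found by integrating `τ ↦ erf(a/√τ)` by parts) satisfies `F'(u) = erf(a/√u)` for `u > 0`,
because the two terms containing `exp(-a²/u)` cancel. For `a > 0`, `F(u) → 0` as `u → 0⁺`:
`erf(a/√u) → 1` and `√u exp(-a²/u) → 0`. Since `|erf| ≤ 1`, the integrand is bounded, so the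
fundamental theorem of calculus with a one-sided limit at the lower endpoint gives `F(t)`.
-/

open Real MeasureTheory

noncomputable def erf (a : ℝ) : ℝ := (2 / Real.sqrt π) * ∫ b in (0:ℝ)..a, Real.exp (-b^2)

open Set Filter Topology

lemma hasDerivAt_erf (x : ℝ) : HasDerivAt erf (2 / √π * exp (-x ^ 2)) x := by
  have hg : Continuous fun b : ℝ => exp (-b ^ 2) := by fun_prop
  exact (intervalIntegral.integral_hasDerivAt_right (hg.intervalIntegrable 0 x)
    hg.aestronglyMeasurable.stronglyMeasurableAtFilter hg.continuousAt).const_mul _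

lemma continuous_erf : Continuous erf :=
  continuous_iff_continuousAt.2 fun x => (hasDerivAt_erf x).continuousAt

lemma erf_neg (x : ℝ) : erf (-x) = -erf x := by
  have h := intervalIntegral.integral_comp_neg (a := 0) (b := x) fun b : ℝ => exp (-b ^ 2)
  simp only [neg_sq, neg_zero] at h
  rw [erf, erf, intervalIntegral.integral_symm, ← h, mul_neg]

lemma integrableOn_exp_neg_sq_Ioi : IntegrableOn (fun b : ℝ => exp (-b ^ 2)) (Ioi 0) := by
  simpa using (integrable_exp_neg_mul_sq one_pos).integrableOn (s := Ioi 0)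

lemma integral_exp_neg_sq_Ioi : ∫ b in Ioi (0:ℝ), exp (-b ^ 2) = √π / 2 := by
  simpa using integral_gaussian_Ioi 1

lemma tendsto_erf_atTop : Tendsto erf atTop (𝓝 1) := by
  have h := (intervalIntegral_tendsto_integral_Ioi 0 integrableOn_exp_neg_sq_Ioi
    tendsto_id).const_mul (2 / √π)
  rwa [integral_exp_neg_sq_Ioi, div_mul_div_cancel₀ (by positivity), div_self two_ne_zero] at h

lemma erf_nonneg {x : ℝ} (hx : 0 ≤ x) : 0 ≤ erf x :=
  mul_nonneg (by positivity) (intervalIntegral.integral_nonneg hx fun _ _ => (exp_pos _).le)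

lemma erf_le_one {x : ℝ} (hx : 0 ≤ x) : erf x ≤ 1 := by
  have h : ∫ b in (0:ℝ)..x, exp (-b ^ 2) ≤ √π / 2 := by
    rw [intervalIntegral.integral_of_le hx, ← integral_exp_neg_sq_Ioi]
    exact setIntegral_mono_set integrableOn_exp_neg_sq_Ioi
      (ae_of_all _ fun _ => (exp_pos _).le) (ae_of_all _ Ioc_subset_Ioi_self)
  calc erf x ≤ 2 / √π * (√π / 2) := mul_le_mul_of_nonneg_left h (by positivity)
    _ = 1 := by field_simp

lemma abs_erf_le_one (x : ℝ) : |erf x| ≤ 1 := by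
  rcases le_total 0 x with hx | hx
  · rw [abs_of_nonneg (erf_nonneg hx)]
    exact erf_le_one hx
  · have hneg := erf_nonneg (neg_nonneg.2 hx)
    rw [erf_neg] at hneg
    rw [abs_of_nonpos (by linarith), ← erf_neg]
    exact erf_le_one (neg_nonneg.2 hx)

lemma hasDerivAt_erf_div_sqrt (a : ℝ) {τ : ℝ} (hτ : 0 < τ) :
    HasDerivAt (fun u => erf (a / √u)) (-(a / (√π * (τ * √τ))) * exp (-a ^ 2 / τ)) τ := by
  have hdiv : HasDerivAt (fun u => a / √u) (-(a / (2 * (τ * √τ)))) τ := by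
    refine (((hasDerivAt_sqrt hτ.ne').inv (sqrt_pos.2 hτ).ne').const_mul a).congr_deriv ?_
    field_simp
    rw [sq_sqrt hτ.le]
  refine ((hasDerivAt_erf _).comp τ hdiv).congr_deriv ?_
  rw [div_pow, sq_sqrt hτ.le]
  field_simp

lemma hasDerivAt_exp_neg_sq_div (a : ℝ) {τ : ℝ} (hτ : 0 < τ) :
    HasDerivAt (fun u => exp (-a ^ 2 / u)) (a ^ 2 / τ ^ 2 * exp (-a ^ 2 / τ)) τ := by
  refine ((hasDerivAt_inv hτ.ne').const_mul (-a ^ 2)).exp.congr_deriv ?_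
  field_simp

noncomputable def erfDivSqrtPrimitive (a u : ℝ) : ℝ :=
  (2 * a ^ 2 + u) * erf (a / √u) + 2 * a * √(u / π) * exp (-a ^ 2 / u) - 2 * a ^ 2

lemma hasDerivAt_erfDivSqrtPrimitive (a : ℝ) {τ : ℝ} (hτ : 0 < τ) :
    HasDerivAt (erfDivSqrtPrimitive a) (erf (a / √τ)) τ := by
  have hsqrt : HasDerivAt (fun u => √(u / π)) (1 / (2 * √τ * √π)) τ := by
    simp_rw [sqrt_div' _ pi_pos.le]
    refine ((hasDerivAt_sqrt hτ.ne').div_const √π).congr_deriv ?_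
    field_simp
  refine (((hasDerivAt_id' τ).const_add (2 * a ^ 2)).mul (hasDerivAt_erf_div_sqrt a hτ)).add
    ((hsqrt.const_mul (2 * a)).mul (hasDerivAt_exp_neg_sq_div a hτ)) |>.sub_const (2 * a ^ 2)
    |>.congr_deriv ?_
  rw [sqrt_div' _ pi_pos.le]
  field_simp
  rw [sq_sqrt hτ.le]
  ring

lemma tendsto_erfDivSqrtPrimitive_zero {a : ℝ} (ha : 0 < a) :
    Tendsto (erfDivSqrtPrimitive a) (𝓝[>] 0) (𝓝 0) := by
  have hsqrt : Tendsto (fun u => √u) (𝓝[>] 0) (𝓝[>] 0) := by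
    refine tendsto_nhdsWithin_iff.2 ⟨?_, eventually_nhdsWithin_of_forall fun u hu => sqrt_pos.2 hu⟩
    simpa using (continuous_sqrt.tendsto 0).mono_left nhdsWithin_le_nhds
  have herf : Tendsto (fun u => erf (a / √u)) (𝓝[>] 0) (𝓝 1) :=
    tendsto_erf_atTop.comp (hsqrt.inv_tendsto_nhdsGT_zero.const_mul_atTop ha)
  have hexp : Tendsto (fun u => exp (-a ^ 2 / u)) (𝓝[>] 0) (𝓝 0) :=
    tendsto_exp_atBot.comp <| (tendsto_neg_atTop_atBot.comp
      (tendsto_inv_nhdsGT_zero.const_mul_atTop (pow_pos ha 2))).congr fun u => by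
        simp [div_eq_mul_inv]
  have hlin : Tendsto (fun u : ℝ => 2 * a ^ 2 + u) (𝓝[>] 0) (𝓝 (2 * a ^ 2)) :=
    ((continuous_const_add _).tendsto' 0 _ (add_zero _)).mono_left nhdsWithin_le_nhds
  have hroot : Tendsto (fun u => √(u / π)) (𝓝[>] 0) (𝓝 0) :=
    ((continuous_sqrt.comp (continuous_id.div_const π)).tendsto' 0 0 (by simp)).mono_left
      nhdsWithin_le_nhds
  have h := ((hlin.mul herf).add ((hroot.const_mul (2 * a)).mul hexp)).sub_const (2 * a ^ 2)
  rwa [mul_one, mul_zero, add_zero, sub_self] at h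

lemma intervalIntegrable_erf_div_sqrt (a t : ℝ) :
    IntervalIntegrable (fun τ => erf (a / √τ)) volume 0 t := by
  rw [intervalIntegrable_iff]
  refine IntegrableOn.of_bound measure_Ioc_lt_top ?_ 1 (ae_of_all _ fun _ => abs_erf_le_one _)
  exact (continuous_erf.measurable.comp
    (measurable_const.div continuous_sqrt.measurable)).aestronglyMeasurable

/-- `∫₀^t erf(a/√τ) dτ = (2a² + t) erf(a/√t) + 2a √(t/π) exp(−a²/t) − 2a²`
for `a > 0`, `t > 0`. -/
theorem integral_erf_pos (a t : ℝ) (ha : 0 < a) (ht : 0 < t) :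
    ∫ τ in (0:ℝ)..t, erf (a / Real.sqrt τ)
    = (2*a^2 + t) * erf (a / Real.sqrt t)
      + 2*a * Real.sqrt (t/π) * Real.exp (-(a^2)/t) - 2*a^2 := by
  rw [intervalIntegral.integral_eq_sub_of_hasDerivAt_of_tendsto ht
    (fun τ hτ => hasDerivAt_erfDivSqrtPrimitive a hτ.1) (intervalIntegrable_erf_div_sqrt a t)
    (tendsto_erfDivSqrtPrimitive_zero ha)
    (hasDerivAt_erfDivSqrtPrimitive a ht).continuousAt.continuousWithinAt, sub_zero]
  rfl
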